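/- Let U ⊆ ℍ be open, f₀, f₁ : ℝ⁴ → ℝ be C¹, f : U → ℍ be given by f(x) = f₁(x₁,x₂,x₃,x₄)e₁ + ∑ᵢ₌₂⁴ xᵢ f₀(x₁,x₂,x₃,x₄)eᵢ, and c = ∑ₖcₖeₖ ∈ U. If f is algebraic regular at c, then the limit as Δq → 0 (Δq ∈ ℍ, Δq ≠ 0) of { f(c+Δq) − f(c) + ∑ᵢ₌₂⁴ [ f→ᶜᵢ(c + (Δq)ᵢ·(e₁+e₂+e₃+e₄)) − f→ᶜᵢ(c) ] }·(Δq)⁻¹ exists and equals ∂f/∂x₁(c), where (Δq)ᵢ denotes the i-th real coordinate of Δq. (Formally: the indicated function of Δq tends to ∂f/∂x₁(c) along the punctured neighborhood filter 𝓝[≠] 0 in ℍ.) -/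

import Mathlib

open scoped Quaternion

noncomputable section

/-- The standard basis `e₁ = 1, e₂ = i, e₃ = j, e₄ = k` of the quaternions. -/
def e : Fin 4 → ℍ[ℝ] := ![1, ⟨0,1,0,0⟩, ⟨0,0,1,0⟩, ⟨0,0,0,1⟩]

/-- The real coordinates of a quaternion. -/
def toTuple (x : ℍ[ℝ]) : Fin 4 → ℝ := ![x.re, x.imI, x.imJ, x.imK]
/-- The `i`-th partial derivative of a function `g : ℝ⁴ → ℝ`. -/
def pd (g : (Fin 4 → ℝ) → ℝ) (i : Fin 4) (p : Fin 4 → ℝ) : ℝ :=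
  fderiv ℝ g p (Pi.single i 1)

/-- `f` is given on `U` by `f(x) = f₁(x₁,x₂,x₃,x₄)e₁ + ∑ₖ₌₂⁴ xₖ f₀(x₁,x₂,x₃,x₄)eₖ`. -/
def Represents (f : ℍ[ℝ] → ℍ[ℝ]) (U : Set ℍ[ℝ]) (f₀ f₁ : (Fin 4 → ℝ) → ℝ) : Prop :=
  ∀ x ∈ U, f x = f₁ (toTuple x) • e 0 + (x.imI * f₀ (toTuple x)) • e 1 +
    (x.imJ * f₀ (toTuple x)) • e 2 + (x.imK * f₀ (toTuple x)) • e 3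

/-- The generalized Cauchy–Riemann equations (ii) of algebraic regularity, at `p ∈ ℝ⁴`. -/
def RegularEqs (f₀ f₁ : (Fin 4 → ℝ) → ℝ) (p : Fin 4 → ℝ) : Prop :=
  pd f₁ 0 p = f₀ p + p 1 * pd f₀ 1 p + p 2 * pd f₀ 2 p + p 3 * pd f₀ 3 p ∧
  (∀ i : Fin 4, i ≠ 0 → pd f₁ i p = -(p i * pd f₀ 0 p)) ∧
  (∀ i j : Fin 4, i ≠ 0 → j ≠ 0 → i ≠ j → p i * pd f₀ j p = p j * pd f₀ i p)

/-- `f` is algebraic regular at `c ∈ U`. -/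
def AlgebraicRegularAt (f : ℍ[ℝ] → ℍ[ℝ]) (U : Set ℍ[ℝ]) (c : ℍ[ℝ]) : Prop :=
  ∃ f₀ f₁ : (Fin 4 → ℝ) → ℝ, ContDiff ℝ 1 f₀ ∧ ContDiff ℝ 1 f₁ ∧
    Represents f U f₀ f₁ ∧ RegularEqs f₀ f₁ (toTuple c)

/-- `f` is algebraic regular on `U`. -/
def AlgebraicRegularOn (f : ℍ[ℝ] → ℍ[ℝ]) (U : Set ℍ[ℝ]) : Prop :=
  ∀ c ∈ U, AlgebraicRegularAt f U c
/-- The function `f→ᶜ₄` (case `i = 2, j = 3` of (114)). -/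
def frFour (f₀ : (Fin 4 → ℝ) → ℝ) (c : ℍ[ℝ]) (x : ℍ[ℝ]) : ℍ[ℝ] :=
  (c.imI * f₀ ![c.re, x.imI, c.imJ, c.imK] + c.imJ * f₀ ![c.re, c.imI, x.imJ, c.imK]) • e 3 +
  ((-1 : ℝ) ^ (2 + 3) * c.imI * f₀ ![x.re, c.imI, c.imJ, c.imK] -
    c.imK * f₀ ![c.re, c.imI, x.imJ, c.imK]) • e 2 -
  ((-1 : ℝ) ^ (2 + 3) * c.imJ * f₀ ![x.re, c.imI, c.imJ, c.imK] +
    c.imK * f₀ ![c.re, x.imI, c.imJ, c.imK]) • e 1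

/-- The function `f→ᶜ₃` (case `i = 2, j = 4` of (114)). -/
def frThree (f₀ : (Fin 4 → ℝ) → ℝ) (c : ℍ[ℝ]) (x : ℍ[ℝ]) : ℍ[ℝ] :=
  (c.imI * f₀ ![c.re, x.imI, c.imJ, c.imK] + c.imK * f₀ ![c.re, c.imI, c.imJ, x.imK]) • e 2 +
  ((-1 : ℝ) ^ (2 + 4) * c.imI * f₀ ![x.re, c.imI, c.imJ, c.imK] -
    c.imJ * f₀ ![c.re, c.imI, c.imJ, x.imK]) • e 3 -
  ((-1 : ℝ) ^ (2 + 4) * c.imK * f₀ ![x.re, c.imI, c.imJ, c.imK] +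
    c.imJ * f₀ ![c.re, x.imI, c.imJ, c.imK]) • e 1

/-- The function `f→ᶜ₂` (case `i = 3, j = 4` of (114)). -/
def frTwo (f₀ : (Fin 4 → ℝ) → ℝ) (c : ℍ[ℝ]) (x : ℍ[ℝ]) : ℍ[ℝ] :=
  (c.imJ * f₀ ![c.re, c.imI, x.imJ, c.imK] + c.imK * f₀ ![c.re, c.imI, c.imJ, x.imK]) • e 1 +
  ((-1 : ℝ) ^ (3 + 4) * c.imJ * f₀ ![x.re, c.imI, c.imJ, c.imK] -
    c.imI * f₀ ![c.re, c.imI, c.imJ, x.imK]) • e 3 -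
  ((-1 : ℝ) ^ (3 + 4) * c.imK * f₀ ![x.re, c.imI, c.imJ, c.imK] +
    c.imI * f₀ ![c.re, c.imI, x.imJ, c.imK]) • e 2

/-- The right difference quotient of Proposition 4.1 (iii). -/
def rightQuot (f : ℍ[ℝ] → ℍ[ℝ]) (f₀ : (Fin 4 → ℝ) → ℝ) (c : ℍ[ℝ]) (Δq : ℍ[ℝ]) : ℍ[ℝ] :=
  (f (c + Δq) - f c +
      (frTwo f₀ c (c + Δq.imI • (e 0 + e 1 + e 2 + e 3)) - frTwo f₀ c c) +
      (frThree f₀ c (c + Δq.imJ • (e 0 + e 1 + e 2 + e 3)) - frThree f₀ c c) +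
      (frFour f₀ c (c + Δq.imK • (e 0 + e 1 + e 2 + e 3)) - frFour f₀ c c)) *
    (Δq)⁻¹

/-!
Write `D = ∂f/∂x₁(c)` and `N(Δq)` for the bracket in the right quotient, so that the quotient
is `N(Δq) Δq⁻¹` and `N(0) = 0`. Such a quotient tends to `D` as soon as `N` is differentiable
at `0` with derivative `h ↦ D h`. The term `f(c + Δq) - f(c)` contributes `df_c`, which sends
`e₁` to `D` but in general not `eᵢ` to `D eᵢ` for `i = 2, 3, 4`. The `i`-th correction
depends on `Δq` only through `(Δq)ᵢ`, and the regularity equations say precisely that its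
derivative along that coordinate is the defect `D eᵢ - df_c(eᵢ)`.

The regularity equations are assumed for some representation `(g₀, g₁)` of `f`; they transfer
to `(f₀, f₁)` since two representations agree near `c`: at points with `x₂ ≠ 0` by
cancellation, and then everywhere by continuity, as these points are dense.
-/

open Filter Topology

theorem eqOn_of_mul_left_eq_of_dense {X K : Type*} [TopologicalSpace X] [TopologicalSpace K]
    [T2Space K] [MulZeroClass K] [IsLeftCancelMulZero K] {V : Set X} {φ ψ ℓ : X → K}
    (hV : IsOpen V) (hφ : ContinuousOn φ V) (hψ : ContinuousOn ψ V)
    (hℓ : Dense {x | ℓ x ≠ 0}) (h : ∀ x ∈ V, ℓ x * φ x = ℓ x * ψ x) : Set.EqOn φ ψ V :=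
  Set.EqOn.of_subset_closure (fun x hx => mul_left_cancel₀ hx.2 (h x hx.1)) hφ hψ
    Set.inter_subset_left (hℓ.open_subset_closure_inter hV)

theorem tendsto_mul_inv_of_hasFDerivAt {𝕜 A : Type*} [NontriviallyNormedField 𝕜]
    [NormedDivisionRing A] [NormedAlgebra 𝕜 A] {N : A → A} {D : A}
    (hN : HasFDerivAt N (ContinuousLinearMap.mul 𝕜 A D) 0) (hN0 : N 0 = 0) :
    Tendsto (fun h => N h * h⁻¹) (𝓝[≠] 0) (𝓝 D) := by
  have hlo : (fun h => N h - D * h) =o[𝓝 0] fun h => h := by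
    simpa [hN0] using hasFDerivAt_iff_isLittleO_nhds_zero.mp hN
  rw [tendsto_iff_norm_sub_tendsto_zero]
  refine (hlo.norm_norm.tendsto_div_nhds_zero.mono_left nhdsWithin_le_nhds).congr' ?_
  filter_upwards [self_mem_nhdsWithin] with h (hh : h ≠ 0)
  rw [div_eq_mul_inv, ← norm_inv, ← norm_mul, sub_mul, mul_assoc, mul_inv_cancel₀ hh, mul_one]

theorem HasDerivAt.hasFDerivAt_comp_clm {E F : Type*} [NormedAddCommGroup E] [NormedSpace ℝ E]
    [NormedAddCommGroup F] [NormedSpace ℝ F] {φ : ℝ → F} {w : F} (hφ : HasDerivAt φ w 0)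
    (ℓ : E →L[ℝ] ℝ) : HasFDerivAt (fun x => φ (ℓ x)) (ℓ.smulRight w) 0 := by
  have hφ' : HasFDerivAt φ (ContinuousLinearMap.toSpanSingleton ℝ w) (ℓ 0) := by
    simpa using hφ.hasFDerivAt
  exact (hφ'.comp 0 ℓ.hasFDerivAt).congr_fderiv (by ext; simp)

lemma hasDerivAt_pd {g : (Fin 4 → ℝ) → ℝ} {p : Fin 4 → ℝ} (hg : DifferentiableAt ℝ g p)
    (m : Fin 4) : HasDerivAt (fun t : ℝ => g (p + t • Pi.single m 1)) (pd g m p) 0 :=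
  hg.hasFDerivAt.hasLineDerivAt _

def toTupleCLE : ℍ[ℝ] ≃L[ℝ] (Fin 4 → ℝ) :=
  LinearEquiv.toContinuousLinearEquiv (E := ℍ[ℝ]) (QuaternionAlgebra.linearEquivTuple _ _ _)

@[simp] lemma coe_toTupleCLE : ⇑toTupleCLE = toTuple := rfl

def coordCLM (i : Fin 4) : ℍ[ℝ] →L[ℝ] ℝ :=
  (ContinuousLinearMap.proj i).comp (toTupleCLE : ℍ[ℝ] →L[ℝ] (Fin 4 → ℝ))

@[simp] lemma toTuple_apply_one (x : ℍ[ℝ]) : toTuple x 1 = x.imI := rfl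
@[simp] lemma toTuple_apply_two (x : ℍ[ℝ]) : toTuple x 2 = x.imJ := rfl
@[simp] lemma toTuple_apply_three (x : ℍ[ℝ]) : toTuple x 3 = x.imK := rfl

@[simp] lemma e_zero : e 0 = 1 := rfl

lemma toTuple_e (k : Fin 4) : toTuple (e k) = Pi.single k 1 := by
  funext i; fin_cases k <;> fin_cases i <;> rfl

@[simp] lemma re_e (k : Fin 4) : (e k).re = (Pi.single k 1 : Fin 4 → ℝ) 0 :=
  congrFun (toTuple_e k) 0
@[simp] lemma imI_e (k : Fin 4) : (e k).imI = (Pi.single k 1 : Fin 4 → ℝ) 1 :=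
  congrFun (toTuple_e k) 1
@[simp] lemma imJ_e (k : Fin 4) : (e k).imJ = (Pi.single k 1 : Fin 4 → ℝ) 2 :=
  congrFun (toTuple_e k) 2
@[simp] lemma imK_e (k : Fin 4) : (e k).imK = (Pi.single k 1 : Fin 4 → ℝ) 3 :=
  congrFun (toTuple_e k) 3

lemma basisOneIJK_eq_e : ⇑(QuaternionAlgebra.basisOneIJK (-1 : ℝ) 0 (-1)) = e := by
  funext k
  apply toTupleCLE.injective
  rw [coe_toTupleCLE, toTuple_e, QuaternionAlgebra.basisOneIJK, Module.Basis.coe_ofEquivFun]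
  exact (QuaternionAlgebra.linearEquivTuple (-1 : ℝ) 0 (-1)).apply_symm_apply _

lemma ContinuousLinearMap.ext_e {L L' : ℍ[ℝ] →L[ℝ] ℍ[ℝ]} (h : ∀ k, L (e k) = L' (e k)) :
    L = L' :=
  ContinuousLinearMap.coe_injective <|
    (QuaternionAlgebra.basisOneIJK (-1 : ℝ) 0 (-1)).ext fun k => by
      rw [basisOneIJK_eq_e]; exact h k

section Representation

variable {f : ℍ[ℝ] → ℍ[ℝ]} {U : Set ℍ[ℝ]} {f₀ f₁ g₀ g₁ : (Fin 4 → ℝ) → ℝ}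

lemma Represents.re_eq (hf : Represents f U f₀ f₁) {x : ℍ[ℝ]} (hx : x ∈ U) :
    (f x).re = f₁ (toTuple x) := by
  simp [hf x hx]

lemma Represents.imI_eq (hf : Represents f U f₀ f₁) {x : ℍ[ℝ]} (hx : x ∈ U) :
    (f x).imI = x.imI * f₀ (toTuple x) := by
  simp [hf x hx]

lemma Represents.eventuallyEq (hU : IsOpen U) {c : ℍ[ℝ]} (hc : c ∈ U)
    (hf₀ : Continuous f₀) (hg₀ : Continuous g₀)
    (hf : Represents f U f₀ f₁) (hg : Represents f U g₀ g₁) :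
    f₀ =ᶠ[𝓝 (toTuple c)] g₀ ∧ f₁ =ᶠ[𝓝 (toTuple c)] g₁ := by
  set V := toTupleCLE.symm ⁻¹' U
  have hV : IsOpen V := hU.preimage toTupleCLE.symm.continuous
  have hcV : toTupleCLE c ∈ V := by
    rw [Set.mem_preimage, toTupleCLE.symm_apply_apply]; exact hc
  have hsymm : ∀ y, toTuple (toTupleCLE.symm y) = y := toTupleCLE.apply_symm_apply
  have hdense : Dense {y : Fin 4 → ℝ | y 1 ≠ 0} :=
    (dense_compl_singleton (0 : ℝ)).preimage (isOpenMap_eval 1)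
  refine ⟨eventuallyEq_of_mem (hV.mem_nhds hcV) ?_, eventuallyEq_of_mem (hV.mem_nhds hcV) ?_⟩
  · refine eqOn_of_mul_left_eq_of_dense hV hf₀.continuousOn hg₀.continuousOn hdense
      fun y hy => ?_
    have := (hf.imI_eq hy).symm.trans (hg.imI_eq hy)
    rwa [hsymm] at this
  · intro y hy
    have := (hf.re_eq hy).symm.trans (hg.re_eq hy)
    rwa [hsymm] at this

end Representation

lemma RegularEqs.congr_of_eventuallyEq {f₀ f₁ g₀ g₁ : (Fin 4 → ℝ) → ℝ} {p : Fin 4 → ℝ}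
    (h : RegularEqs g₀ g₁ p) (h₀ : f₀ =ᶠ[𝓝 p] g₀) (h₁ : f₁ =ᶠ[𝓝 p] g₁) :
    RegularEqs f₀ f₁ p := by
  unfold RegularEqs pd
  rwa [h₀.fderiv_eq, h₁.fderiv_eq, h₀.eq_of_nhds]

def representedFun (f₀ f₁ : (Fin 4 → ℝ) → ℝ) (x : ℍ[ℝ]) : ℍ[ℝ] :=
  f₁ (toTuple x) • e 0 + (x.imI * f₀ (toTuple x)) • e 1 +
    (x.imJ * f₀ (toTuple x)) • e 2 + (x.imK * f₀ (toTuple x)) • e 3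

section RepresentedFun

variable {f₀ f₁ : (Fin 4 → ℝ) → ℝ} {c : ℍ[ℝ]}
  (h₀ : DifferentiableAt ℝ f₀ (toTuple c)) (h₁ : DifferentiableAt ℝ f₁ (toTuple c))
include h₀ h₁

lemma differentiableAt_representedFun : DifferentiableAt ℝ (representedFun f₀ f₁) c := by
  unfold representedFun
  simp only [← toTuple_apply_one, ← toTuple_apply_two, ← toTuple_apply_three, ← coe_toTupleCLE]
  fun_prop

lemma fderiv_representedFun_e (k : Fin 4) :
    fderiv ℝ (representedFun f₀ f₁) c (e k) =
      pd f₁ k (toTuple c) • e 0 +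
      (c.imI * pd f₀ k (toTuple c) + f₀ (toTuple c) * (e k).imI) • e 1 +
      (c.imJ * pd f₀ k (toTuple c) + f₀ (toTuple c) * (e k).imJ) • e 2 +
      (c.imK * pd f₀ k (toTuple c) + f₀ (toTuple c) * (e k).imK) • e 3 := by
  have hT : HasFDerivAt toTuple (toTupleCLE : ℍ[ℝ] →L[ℝ] (Fin 4 → ℝ)) c :=
    toTupleCLE.hasFDerivAt
  have hcoord (i : Fin 4) := (hasFDerivAt_apply i (toTuple c)).comp c hT
  have hF := ((((h₁.hasFDerivAt.comp c hT).smul_const (e 0)).add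
    (((hcoord 1).mul (h₀.hasFDerivAt.comp c hT)).smul_const (e 1))).add
    (((hcoord 2).mul (h₀.hasFDerivAt.comp c hT)).smul_const (e 2))).add
    (((hcoord 3).mul (h₀.hasFDerivAt.comp c hT)).smul_const (e 3))
  rw [(show HasFDerivAt (representedFun f₀ f₁) _ c from hF).fderiv]
  simp [pd, toTuple_e]

end RepresentedFun

section DiagonalLine

variable (c : ℍ[ℝ]) (t : ℝ)

lemma tuple_re_diagonal :
    ![(c + t • (e 0 + e 1 + e 2 + e 3)).re, c.imI, c.imJ, c.imK] =
      toTuple c + t • Pi.single 0 1 := by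
  funext i; fin_cases i <;> simp [toTuple]

lemma tuple_imI_diagonal :
    ![c.re, (c + t • (e 0 + e 1 + e 2 + e 3)).imI, c.imJ, c.imK] =
      toTuple c + t • Pi.single 1 1 := by
  funext i; fin_cases i <;> simp [toTuple]

lemma tuple_imJ_diagonal :
    ![c.re, c.imI, (c + t • (e 0 + e 1 + e 2 + e 3)).imJ, c.imK] =
      toTuple c + t • Pi.single 2 1 := by
  funext i; fin_cases i <;> simp [toTuple]

lemma tuple_imK_diagonal :
    ![c.re, c.imI, c.imJ, (c + t • (e 0 + e 1 + e 2 + e 3)).imK] =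
      toTuple c + t • Pi.single 3 1 := by
  funext i; fin_cases i <;> simp [toTuple]

end DiagonalLine

section Corrections

variable {f₀ f₁ : (Fin 4 → ℝ) → ℝ} {c : ℍ[ℝ]}
  (h₀ : DifferentiableAt ℝ f₀ (toTuple c)) (h₁ : DifferentiableAt ℝ f₁ (toTuple c))
  (hreg : RegularEqs f₀ f₁ (toTuple c))
include h₀ h₁ hreg

lemma hasDerivAt_frTwo_diagonal :
    HasDerivAt (fun t : ℝ => frTwo f₀ c (c + t • (e 0 + e 1 + e 2 + e 3)))
      (fderiv ℝ (representedFun f₀ f₁) c (e 0) * e 1 - fderiv ℝ (representedFun f₀ f₁) c (e 1))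
      0 := by
  have d := hasDerivAt_pd h₀
  have hφ := (((((d 2).const_mul c.imJ).add ((d 3).const_mul c.imK)).smul_const (e 1)).add
      ((((d 0).const_mul ((-1 : ℝ) ^ (3 + 4) * c.imJ)).sub ((d 3).const_mul c.imI)).smul_const
        (e 3))).sub
      ((((d 0).const_mul ((-1 : ℝ) ^ (3 + 4) * c.imK)).add ((d 2).const_mul c.imI)).smul_const
        (e 2))
  simp only [frTwo, tuple_re_diagonal, tuple_imJ_diagonal, tuple_imK_diagonal]
  refine hφ.congr_deriv ?_
  rw [fderiv_representedFun_e h₀ h₁, fderiv_representedFun_e h₀ h₁]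
  obtain ⟨hre, him, hmix⟩ := hreg
  have h1 := him 1 (by decide)
  have r12 := hmix 1 2 (by decide) (by decide) (by decide)
  have r13 := hmix 1 3 (by decide) (by decide) (by decide)
  simp only [toTuple_apply_one, toTuple_apply_two, toTuple_apply_three] at hre h1 r12 r13
  ext <;> simp [Quaternion.re_mul, Quaternion.imI_mul, Quaternion.imJ_mul, Quaternion.imK_mul]
  · linear_combination h1
  · linear_combination -hre
  · linear_combination -r12
  · linear_combination -r13

lemma hasDerivAt_frThree_diagonal :
    HasDerivAt (fun t : ℝ => frThree f₀ c (c + t • (e 0 + e 1 + e 2 + e 3)))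
      (fderiv ℝ (representedFun f₀ f₁) c (e 0) * e 2 - fderiv ℝ (representedFun f₀ f₁) c (e 2))
      0 := by
  have d := hasDerivAt_pd h₀
  have hφ := (((((d 1).const_mul c.imI).add ((d 3).const_mul c.imK)).smul_const (e 2)).add
      ((((d 0).const_mul ((-1 : ℝ) ^ (2 + 4) * c.imI)).sub ((d 3).const_mul c.imJ)).smul_const
        (e 3))).sub
      ((((d 0).const_mul ((-1 : ℝ) ^ (2 + 4) * c.imK)).add ((d 1).const_mul c.imJ)).smul_const
        (e 1))
  simp only [frThree, tuple_re_diagonal, tuple_imI_diagonal, tuple_imK_diagonal]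
  refine hφ.congr_deriv ?_
  rw [fderiv_representedFun_e h₀ h₁, fderiv_representedFun_e h₀ h₁]
  obtain ⟨hre, him, hmix⟩ := hreg
  have h2 := him 2 (by decide)
  have r12 := hmix 1 2 (by decide) (by decide) (by decide)
  have r23 := hmix 2 3 (by decide) (by decide) (by decide)
  simp only [toTuple_apply_one, toTuple_apply_two, toTuple_apply_three] at hre h2 r12 r23
  ext <;> simp [Quaternion.re_mul, Quaternion.imI_mul, Quaternion.imJ_mul, Quaternion.imK_mul]
  · linear_combination h2
  · linear_combination r12
  · linear_combination -hre
  · linear_combination -r23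

lemma hasDerivAt_frFour_diagonal :
    HasDerivAt (fun t : ℝ => frFour f₀ c (c + t • (e 0 + e 1 + e 2 + e 3)))
      (fderiv ℝ (representedFun f₀ f₁) c (e 0) * e 3 - fderiv ℝ (representedFun f₀ f₁) c (e 3))
      0 := by
  have d := hasDerivAt_pd h₀
  have hφ := (((((d 1).const_mul c.imI).add ((d 2).const_mul c.imJ)).smul_const (e 3)).add
      ((((d 0).const_mul ((-1 : ℝ) ^ (2 + 3) * c.imI)).sub ((d 2).const_mul c.imK)).smul_const
        (e 2))).sub
      ((((d 0).const_mul ((-1 : ℝ) ^ (2 + 3) * c.imJ)).add ((d 1).const_mul c.imK)).smul_const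
        (e 1))
  simp only [frFour, tuple_re_diagonal, tuple_imI_diagonal, tuple_imJ_diagonal]
  refine hφ.congr_deriv ?_
  rw [fderiv_representedFun_e h₀ h₁, fderiv_representedFun_e h₀ h₁]
  obtain ⟨hre, him, hmix⟩ := hreg
  have h3 := him 3 (by decide)
  have r13 := hmix 1 3 (by decide) (by decide) (by decide)
  have r23 := hmix 2 3 (by decide) (by decide) (by decide)
  simp only [toTuple_apply_one, toTuple_apply_two, toTuple_apply_three] at hre h3 r13 r23
  ext <;> simp [Quaternion.re_mul, Quaternion.imI_mul, Quaternion.imJ_mul, Quaternion.imK_mul]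
  · linear_combination h3
  · linear_combination r13
  · linear_combination r23
  · linear_combination -hre

end Corrections

def rightNum (f : ℍ[ℝ] → ℍ[ℝ]) (f₀ : (Fin 4 → ℝ) → ℝ) (c : ℍ[ℝ]) (Δq : ℍ[ℝ]) : ℍ[ℝ] :=
  f (c + Δq) - f c +
    (frTwo f₀ c (c + Δq.imI • (e 0 + e 1 + e 2 + e 3)) - frTwo f₀ c c) +
    (frThree f₀ c (c + Δq.imJ • (e 0 + e 1 + e 2 + e 3)) - frThree f₀ c c) +
    (frFour f₀ c (c + Δq.imK • (e 0 + e 1 + e 2 + e 3)) - frFour f₀ c c)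

lemma rightNum_zero (f : ℍ[ℝ] → ℍ[ℝ]) (f₀ : (Fin 4 → ℝ) → ℝ) (c : ℍ[ℝ]) :
    rightNum f f₀ c 0 = 0 := by
  simp [rightNum]

lemma hasFDerivAt_rightNum {f : ℍ[ℝ] → ℍ[ℝ]} {f₀ : (Fin 4 → ℝ) → ℝ} {c : ℍ[ℝ]}
    {L : ℍ[ℝ] →L[ℝ] ℍ[ℝ]} (hf : HasFDerivAt f L c)
    (h₂ : HasDerivAt (fun t : ℝ => frTwo f₀ c (c + t • (e 0 + e 1 + e 2 + e 3)))
      (L (e 0) * e 1 - L (e 1)) 0)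
    (h₃ : HasDerivAt (fun t : ℝ => frThree f₀ c (c + t • (e 0 + e 1 + e 2 + e 3)))
      (L (e 0) * e 2 - L (e 2)) 0)
    (h₄ : HasDerivAt (fun t : ℝ => frFour f₀ c (c + t • (e 0 + e 1 + e 2 + e 3)))
      (L (e 0) * e 3 - L (e 3)) 0) :
    HasFDerivAt (rightNum f f₀ c) (ContinuousLinearMap.mul ℝ ℍ[ℝ] (L (e 0))) 0 := by
  have hshift : HasFDerivAt (fun Δq => f (c + Δq)) L 0 :=
    (by simpa using hf : HasFDerivAt f L (c + 0)).comp 0 ((hasFDerivAt_id 0).const_add c)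
  refine ((((hshift.sub_const (f c)).add
    ((h₂.hasFDerivAt_comp_clm (coordCLM 1)).sub_const _)).add
    ((h₃.hasFDerivAt_comp_clm (coordCLM 2)).sub_const _)).add
    ((h₄.hasFDerivAt_comp_clm (coordCLM 3)).sub_const _)).congr_fderiv ?_
  refine ContinuousLinearMap.ext_e fun k => ?_
  fin_cases k <;> simp [coordCLM]

/-- if `f` is algebraic regular at `c`, the right difference quotient
tends to `∂f/∂x₁(c)` as `Δq → 0`. -/
theorem tendsto_rightQuot_of_algebraicRegularAt (U : Set ℍ[ℝ]) (hU : IsOpen U)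
    (f : ℍ[ℝ] → ℍ[ℝ]) (f₀ f₁ : (Fin 4 → ℝ) → ℝ)
    (hf₀ : ContDiff ℝ 1 f₀) (hf₁ : ContDiff ℝ 1 f₁)
    (hf : Represents f U f₀ f₁) (c : ℍ[ℝ]) (hc : c ∈ U)
    (hreg : AlgebraicRegularAt f U c) :
    Filter.Tendsto (rightQuot f f₀ c) (nhdsWithin 0 {q : ℍ[ℝ] | q ≠ 0})
      (nhds (fderiv ℝ f c (e 0))) := by
  obtain ⟨g₀, g₁, hg₀, -, hg, hgreg⟩ := hreg
  obtain ⟨hfg₀, hfg₁⟩ := hf.eventuallyEq hU hc hf₀.continuous hg₀.continuous hg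
  have hfreg : RegularEqs f₀ f₁ (toTuple c) := hgreg.congr_of_eventuallyEq hfg₀ hfg₁
  have h₀ : DifferentiableAt ℝ f₀ (toTuple c) := hf₀.differentiable one_ne_zero _
  have h₁ : DifferentiableAt ℝ f₁ (toTuple c) := hf₁.differentiable one_ne_zero _
  have hfd : HasFDerivAt f (fderiv ℝ (representedFun f₀ f₁) c) c :=
    (differentiableAt_representedFun h₀ h₁).hasFDerivAt.congr_of_eventuallyEq
      (eventuallyEq_of_mem (hU.mem_nhds hc) hf)
  rw [hfd.fderiv]
  show Tendsto (fun Δq => rightNum f f₀ c Δq * Δq⁻¹) _ _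
  exact tendsto_mul_inv_of_hasFDerivAt (hasFDerivAt_rightNum hfd
    (hasDerivAt_frTwo_diagonal h₀ h₁ hfreg) (hasDerivAt_frThree_diagonal h₀ h₁ hfreg)
    (hasDerivAt_frFour_diagonal h₀ h₁ hfreg)) (rightNum_zero f f₀ c)
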